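/- Fix an integer N ≥ 2 and a real R > 0, and let H = {x ∈ ℝ^N : ‖x‖ = R and x_N ≥ 0} be the hemisphere. Let J = (0, …, 0, R) be the pole. Then sup_{y ∈ H} ‖J − y‖ = √2·R, and for every x ∈ H with x ≠ J one has sup_{y ∈ H} ‖x − y‖ > √2·R; that is, J is the unique Chebyshev centre of H among points of H (the unique point minimizing the maximum distance to H). -/

import Mathlib

/-! For `y` on the sphere of radius `R` and a unit vector `e`,
`‖R • e - y‖² = 2R² - 2R⟪e, y⟫`, which is at most `2R²` on the hemisphere `0 ≤ ⟪e, y⟫`, with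
equality on the equator. For any other point `x` of the hemisphere, the component `w` of `x`
orthogonal to `e` is nonzero, and the equator point `y = -(R / ‖w‖) • w` satisfies
`‖x - y‖² = 2R² + 2R‖w‖ > 2R²`. -/

open Module
open scoped RealInnerProductSpace

def hemisphere {E : Type*} [NormedAddCommGroup E] [InnerProductSpace ℝ E] (e : E) (R : ℝ) :
    Set E :=
  {x | ‖x‖ = R ∧ 0 ≤ ⟪e, x⟫}

section

variable {E : Type*} [NormedAddCommGroup E] [InnerProductSpace ℝ E] {e x y : E} {R : ℝ}

theorem exists_inner_eq_zero_norm_eq (hE : 2 ≤ finrank ℝ E) (e : E) (hR : 0 ≤ R) :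
    ∃ y : E, ⟪e, y⟫ = 0 ∧ ‖y‖ = R := by
  have : FiniteDimensional ℝ E := finite_of_finrank_pos (R := ℝ) (M := E) (by omega)
  have hpos : 0 < finrank ℝ (ℝ ∙ e)ᗮ := by
    have hsum := (ℝ ∙ e).finrank_add_finrank_orthogonal
    have hspan := finrank_span_le_card (R := ℝ) ({e} : Set E)
    simp only [Set.toFinset_singleton, Finset.card_singleton] at hspan
    omega
  obtain ⟨⟨v, hv⟩, hv0⟩ := (finrank_pos_iff_exists_ne_zero (R := ℝ)).1 hpos
  have hv0 : v ≠ 0 := by simpa using hv0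
  refine ⟨(R / ‖v‖) • v, ?_, ?_⟩
  · rw [inner_smul_right, Submodule.mem_orthogonal_singleton_iff_inner_right.1 hv, mul_zero]
  · rw [norm_smul, Real.norm_of_nonneg (by positivity), div_mul_cancel₀ _ (norm_ne_zero_iff.2 hv0)]

theorem norm_smul_sub_sq (he : ‖e‖ = 1) (hy : ‖y‖ = R) :
    ‖R • e - y‖ ^ 2 = 2 * R ^ 2 - 2 * R * ⟪e, y⟫ := by
  rw [norm_sub_sq_real, norm_smul, he, mul_one, Real.norm_eq_abs, sq_abs, hy,
    real_inner_smul_left]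
  ring

theorem sq_sqrt_two_mul (R : ℝ) : (√2 * R) ^ 2 = 2 * R ^ 2 := by
  rw [mul_pow, Real.sq_sqrt zero_le_two]

theorem norm_smul_sub_le_of_mem_hemisphere (he : ‖e‖ = 1) (hR : 0 ≤ R)
    (hy : y ∈ hemisphere e R) : ‖R • e - y‖ ≤ √2 * R := by
  rw [← pow_le_pow_iff_left₀ (norm_nonneg _) (by positivity) two_ne_zero,
    norm_smul_sub_sq he hy.1, sq_sqrt_two_mul]
  nlinarith [mul_nonneg hR hy.2]

theorem isGreatest_norm_smul_sub_hemisphere (hE : 2 ≤ finrank ℝ E) (he : ‖e‖ = 1)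
    (hR : 0 ≤ R) : IsGreatest ((fun y => ‖R • e - y‖) '' hemisphere e R) (√2 * R) := by
  obtain ⟨y, hey, hy⟩ := exists_inner_eq_zero_norm_eq hE e hR
  refine ⟨⟨y, ⟨hy, hey.ge⟩, ?_⟩, ?_⟩
  · rw [← sq_eq_sq₀ (norm_nonneg _) (by positivity), norm_smul_sub_sq he hy, hey,
      sq_sqrt_two_mul]
    ring
  · rintro _ ⟨y, hy, rfl⟩
    exact norm_smul_sub_le_of_mem_hemisphere he hR hy

theorem eq_smul_of_mem_hemisphere_of_sub_inner_smul_eq_zero (he : ‖e‖ = 1)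
    (hx : x ∈ hemisphere e R) (h : x - ⟪e, x⟫ • e = 0) : x = R • e := by
  rw [sub_eq_zero] at h
  have hex : ⟪e, x⟫ = R := by
    rw [← hx.1]
    conv_rhs => rw [h]
    rw [norm_smul, he, mul_one, Real.norm_of_nonneg hx.2]
  rwa [hex] at h

theorem exists_mem_hemisphere_sqrt_two_mul_lt_norm_sub (he : ‖e‖ = 1) (hR : 0 < R)
    (hx : x ∈ hemisphere e R) (hxe : x ≠ R • e) :
    ∃ y ∈ hemisphere e R, √2 * R < ‖x - y‖ := by
  set w := x - ⟪e, x⟫ • e with hw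
  have hw0 : w ≠ 0 := fun h => hxe (eq_smul_of_mem_hemisphere_of_sub_inner_smul_eq_zero he hx h)
  have hwpos : 0 < ‖w‖ := norm_pos_iff.2 hw0
  have hew : ⟪e, w⟫ = 0 := by
    rw [hw, inner_sub_right, inner_smul_right, real_inner_self_eq_norm_sq, he]
    ring
  have hxw : ⟪x, w⟫ = ‖w‖ ^ 2 := by
    rw [← real_inner_self_eq_norm_sq]
    nth_rewrite 1 [show x = w + ⟪e, x⟫ • e by rw [hw, sub_add_cancel]]
    rw [inner_add_left, inner_smul_left, real_inner_comm, hew]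
    simp
  set y := -(R / ‖w‖) • w
  have hy : ‖y‖ = R := by
    rw [norm_smul, norm_neg, Real.norm_of_nonneg (by positivity), div_mul_cancel₀ _ hwpos.ne']
  refine ⟨y, ⟨hy, by rw [inner_smul_right, hew, mul_zero]⟩, ?_⟩
  have hxy : ⟪x, y⟫ = -(R * ‖w‖) := by
    rw [inner_smul_right, hxw]
    field_simp
  rw [← pow_lt_pow_iff_left₀ (by positivity) (norm_nonneg _) two_ne_zero, norm_sub_sq_real,
    hx.1, hy, hxy, sq_sqrt_two_mul]
  nlinarith [mul_pos hR hwpos]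

theorem bddAbove_norm_sub_image_hemisphere (x : E) :
    BddAbove ((fun y => ‖x - y‖) '' hemisphere e R) := by
  refine ⟨‖x‖ + R, ?_⟩
  rintro _ ⟨y, hy, rfl⟩
  exact (norm_sub_le x y).trans_eq (by rw [hy.1])

end

theorem stmt_19 (N : ℕ) (hN : 2 ≤ N) (R : ℝ) (hR : 0 < R)
    (H : Set (EuclideanSpace ℝ (Fin N)))
    (hH : H = {x : EuclideanSpace ℝ (Fin N) | ‖x‖ = R ∧ 0 ≤ x ⟨N - 1, by omega⟩})
    (J : EuclideanSpace ℝ (Fin N))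
    (hJ : J = EuclideanSpace.single (⟨N - 1, by omega⟩ : Fin N) R) :
    sSup ((fun y => ‖J - y‖) '' H) = Real.sqrt 2 * R ∧
    ∀ x ∈ H, x ≠ J → Real.sqrt 2 * R < sSup ((fun y => ‖x - y‖) '' H) := by
  set e := EuclideanSpace.single (⟨N - 1, by omega⟩ : Fin N) (1 : ℝ)
  have he : ‖e‖ = 1 := by simp [e]
  have hHe : H = hemisphere e R := by
    simp [hH, hemisphere, e, EuclideanSpace.inner_single_left]
  have hJe : J = R • e := by
    ext i
    simp [hJ, e]
  have hE : 2 ≤ finrank ℝ (EuclideanSpace ℝ (Fin N)) := by rwa [finrank_euclideanSpace_fin]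
  subst hHe hJe
  refine ⟨(isGreatest_norm_smul_sub_hemisphere hE he hR.le).csSup_eq, fun x hx hxe => ?_⟩
  obtain ⟨y, hy, hlt⟩ := exists_mem_hemisphere_sqrt_two_mul_lt_norm_sub he hR hx hxe
  exact hlt.trans_le (le_csSup (bddAbove_norm_sub_image_hemisphere x) ⟨y, hy, rfl⟩)
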